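/- arXiv:1703.07586 — 4 statements merged into one kernel-verified Lean document; each statement's English description precedes it below -/
import Mathlib

section
/- SP is a minimal mapping cone: SP ⊆ J for every mapping cone J ⊆ P. -/
/-!
A super-positive map is a finite sum of rank-one maps `a ↦ ω(a) b` with `ω` a positive functional
and `b ≥ 0`, and the Choi matrix of such a map is `(ω(e_ij))_ij ⊗ b ≥ 0`, so it is completely
positive. If `φ ∈ J` is nonzero, some `d ≥ 0` has `φ(d) ≠ 0`, hence `Tr φ(d) > 0`, and
`a ↦ ω(a) b` is the sandwich `α ∘ φ ∘ β` of `φ` between the completely positive rank-one maps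
`β(a) = ω(a) d` and `α(x) = Tr(x) Tr(φ(d))⁻¹ b`.
-/

open scoped ComplexOrder Kronecker
open Matrix

namespace Paper

/-- The algebra `M_n` of `n × n` complex matrices. -/
abbrev Mat (n : ℕ) := Matrix (Fin n) (Fin n) ℂ

/-- Linear maps of `M_n` into itself. -/
abbrev MatMap (n : ℕ) := Mat n →ₗ[ℂ] Mat n

/-- The matrix algebra `M_n ⊗ M_n`, realized as matrices indexed by pairs. -/
abbrev BigMat (n : ℕ) := Matrix (Fin n × Fin n) (Fin n × Fin n) ℂ

variable {n : ℕ}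

/-- A map `φ : M_n → M_n` is positive if it maps positive semidefinite matrices to
positive semidefinite matrices.  The set of such maps is the cone `P`. -/
def IsPosMap (φ : MatMap n) : Prop :=
  ∀ a : Mat n, a.PosSemidef → (φ a).PosSemidef

/-- The Choi matrix `C_φ = Σ_{i,j} e_{ij} ⊗ φ(e_{ij})`. -/
noncomputable def choiMatrix (φ : MatMap n) : BigMat n :=
  Matrix.of fun p q => φ (Matrix.single p.1 q.1 1) p.2 q.2

/-- `φ` is completely positive iff its Choi matrix is positive semidefinite.
The set of such maps is the cone `CP`. -/
def IsCP (φ : MatMap n) : Prop := (choiMatrix φ).PosSemidef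

/-- The transpose map `a ↦ aᵀ` on `M_n`, as a linear map. -/
noncomputable def transposeMap (n : ℕ) : MatMap n where
  toFun a := a.transpose
  map_add' a b := Matrix.transpose_add a b
  map_smul' c a := Matrix.transpose_smul c a

/-- `φ` is co-completely positive if `t ∘ φ` is completely positive.  The set of
such maps is the cone `coCP`. -/
def IsCoCP (φ : MatMap n) : Prop := IsCP ((transposeMap n) ∘ₗ φ)

/-- A state on `M_n`: a positive linear functional with `ω(1) = 1`. -/
def IsState (ω : Mat n →ₗ[ℂ] ℂ) : Prop :=
  (∀ a : Mat n, a.PosSemidef → 0 ≤ ω a) ∧ ω 1 = 1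

/-- `φ` is super-positive if `φ(a) = Σ_i ω_i(a) b_i` with each `b_i` positive
semidefinite and each `ω_i` a state.  The set of such maps is the cone `SP`. -/
def IsSP (φ : MatMap n) : Prop :=
  ∃ (k : ℕ) (b : Fin k → Mat n) (ω : Fin k → (Mat n →ₗ[ℂ] ℂ)),
    (∀ i, (b i).PosSemidef) ∧ (∀ i, IsState (ω i)) ∧
      ∀ a : Mat n, φ a = ∑ i, ω i a • b i

/-- `ψ = φ*`, i.e. `Tr(φ(a) b) = Tr(a ψ(b))` for all `a, b`. -/
def IsAdjointPair (φ ψ : MatMap n) : Prop :=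
  ∀ a b : Mat n, (φ a * b).trace = (a * ψ b).trace

/-- The map `φ^t : a ↦ φ(aᵀ)ᵀ`. -/
noncomputable def mapTranspose (φ : MatMap n) : MatMap n :=
  transposeMap n ∘ₗ φ ∘ₗ transposeMap n

/-- A (symmetric) mapping cone: a nonzero closed convex cone of positive maps of `M_n`
into itself, closed under compositions `α ∘ φ ∘ β` with `α, β` completely positive,
and closed under `φ ↦ φ*` and `φ ↦ φ^t`. -/
structure IsMappingCone (J : Set (MatMap n)) : Prop where
  pos : ∀ φ ∈ J, IsPosMap φ
  nonzero : ∃ φ ∈ J, φ ≠ 0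
  closed : IsClosed ((fun φ : MatMap n => (φ : Mat n → Mat n)) '' J)
  add_mem : ∀ φ ∈ J, ∀ ψ ∈ J, φ + ψ ∈ J
  smul_mem : ∀ c : ℝ, 0 ≤ c → ∀ φ ∈ J, (c : ℂ) • φ ∈ J
  comp_mem : ∀ φ ∈ J, ∀ α β : MatMap n, IsCP α → IsCP β → α ∘ₗ φ ∘ₗ β ∈ J
  adjoint_mem : ∀ φ ∈ J, ∀ ψ : MatMap n, IsAdjointPair φ ψ → ψ ∈ J
  transpose_mem : ∀ φ ∈ J, mapTranspose φ ∈ J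

/-- An invariant mapping cone: a mapping cone closed under compositions
`α ∘ φ ∘ β` with `α, β` arbitrary positive maps. -/
structure IsInvariantMappingCone (J : Set (MatMap n)) extends IsMappingCone J : Prop where
  comp_pos_mem : ∀ φ ∈ J, ∀ α β : MatMap n, IsPosMap α → IsPosMap β → α ∘ₗ φ ∘ₗ β ∈ J

/-- The dual cone `J° = {φ ∈ P : Tr(C_φ C_ψ) ≥ 0 ∀ ψ ∈ J}`. -/
def dualCone (J : Set (MatMap n)) : Set (MatMap n) :=
  {φ | IsPosMap φ ∧ ∀ ψ ∈ J, 0 ≤ (choiMatrix φ * choiMatrix ψ).trace}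

/-- The linear functional `φ̃` on `M_n ⊗ M_n` with `φ̃(a ⊗ b) = Tr(φ(a) bᵀ)`;
equivalently the functional with density matrix `C_φᵗ`. -/
noncomputable def tilde (φ : MatMap n) : BigMat n →ₗ[ℂ] ℂ where
  toFun x := ((choiMatrix φ)ᵀ * x).trace
  map_add' x y := by simp [Matrix.mul_add]
  map_smul' c x := by simp [Matrix.mul_smul]

/-- A positive linear functional on a matrix algebra. -/
def IsPosFunctional {m : Type*} [Fintype m] [DecidableEq m]
    (f : Matrix m m ℂ →ₗ[ℂ] ℂ) : Prop :=
  ∀ x : Matrix m m ℂ, x.PosSemidef → 0 ≤ f x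

/-- The map `ι ⊗ α` on `M_n ⊗ M_n`, acting as `α` on each block. -/
noncomputable def idTensor (α : MatMap n) : BigMat n →ₗ[ℂ] BigMat n where
  toFun x := Matrix.of fun p q => α (Matrix.of fun k l => x (p.1, k) (q.1, l)) p.2 q.2
  map_add' x y := by
    ext p q
    have h : (Matrix.of fun k l => x (p.1, k) (q.1, l) + y (p.1, k) (q.1, l))
        = (Matrix.of fun k l => x (p.1, k) (q.1, l)) +
          (Matrix.of fun k l => y (p.1, k) (q.1, l)) := by
      ext k l; simp
    simp only [Matrix.of_apply, Matrix.add_apply]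
    rw [h, map_add, Matrix.add_apply]
  map_smul' c x := by
    ext p q
    have h : (Matrix.of fun k l => c * x (p.1, k) (q.1, l))
        = c • (Matrix.of fun k l => x (p.1, k) (q.1, l)) := by
      ext k l; simp
    simp only [Matrix.of_apply, Matrix.smul_apply, RingHom.id_apply, smul_eq_mul]
    rw [h, _root_.map_smul, Matrix.smul_apply, smul_eq_mul]

/-- `Ad V : x ↦ V* x V`. -/
noncomputable def adMap (V : Mat n) : MatMap n where
  toFun x := Vᴴ * x * V
  map_add' x y := by simp [Matrix.mul_add, Matrix.add_mul]
  map_smul' c x := by simp [Matrix.mul_smul, Matrix.smul_mul]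

/-- An orthogonal projection in `M_n`. -/
def IsProjection (e : Mat n) : Prop := e * e = e ∧ eᴴ = e

/-- `e` is the range projection of the matrix `a`: the smallest projection `e`
with `e a = a`. -/
def IsRangeProjection (e a : Mat n) : Prop :=
  IsProjection e ∧ e * a = a ∧ ∀ f : Mat n, IsProjection f → f * a = a → f * e = e

/-- `e` is the support projection of the positive map `φ`: the smallest projection
`e` with `φ(e a e) = φ(a)` for all `a`. -/
def IsSupportProjection (e : Mat n) (φ : MatMap n) : Prop :=
  IsProjection e ∧ (∀ a : Mat n, φ (e * a * e) = φ a) ∧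
    ∀ f : Mat n, IsProjection f → (∀ a : Mat n, φ (f * a * f) = φ a) → f * e = e

/-- `D_2`: the smallest invariant mapping cone containing `Ad e` for all rank 2
projections `e`. -/
def D2 (n : ℕ) : Set (MatMap n) :=
  ⋂₀ {J : Set (MatMap n) | IsInvariantMappingCone J ∧
      ∀ e : Mat n, IsProjection e → e.rank = 2 → adMap e ∈ J}

/-- The invariant mapping cone generated by a map `φ`. -/
def genInvCone (φ : MatMap n) : Set (MatMap n) :=
  ⋂₀ {J : Set (MatMap n) | IsInvariantMappingCone J ∧ φ ∈ J}

/-- The smallest mapping cone containing two given sets of maps. -/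
def coneJoin (A B : Set (MatMap n)) : Set (MatMap n) :=
  ⋂₀ {J : Set (MatMap n) | IsMappingCone J ∧ A ⊆ J ∧ B ⊆ J}

/-- `φ` is decomposable, i.e. `φ ∈ CP ⋁ coCP`: a sum of a completely positive and a
co-completely positive map. -/
def Decomposable (φ : MatMap n) : Prop :=
  ∃ α β : MatMap n, IsCP α ∧ IsCoCP β ∧ φ = α + β

/-- `φ` is a PPT-map: both `φ̃` and `φ̃ ∘ (ι ⊗ t)` are positive linear functionals. -/
def IsPPTMap (φ : MatMap n) : Prop :=
  IsPosFunctional (tilde φ) ∧ IsPosFunctional (tilde φ ∘ₗ idTensor (transposeMap n))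

/-- `φ` is an extremal positive map. -/
def IsExtremal (φ : MatMap n) : Prop :=
  IsPosMap φ ∧ ∀ ψ : MatMap n, IsPosMap ψ → IsPosMap (φ - ψ) →
    ∃ l : ℝ, 0 ≤ l ∧ l ≤ 1 ∧ ψ = (l : ℂ) • φ

/-- A `*`-automorphism of `M_n`. -/
def IsStarAut (φ : MatMap n) : Prop :=
  Function.Bijective φ ∧ (∀ a b : Mat n, φ (a * b) = φ a * φ b) ∧
    ∀ a : Mat n, φ aᴴ = (φ a)ᴴ

/-- A `*`-anti-automorphism of `M_n`. -/
def IsStarAntiAut (φ : MatMap n) : Prop :=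
  Function.Bijective φ ∧ (∀ a b : Mat n, φ (a * b) = φ b * φ a) ∧
    ∀ a : Mat n, φ aᴴ = (φ a)ᴴ

section PositiveFunctional

variable {m : Type*} [Fintype m] [DecidableEq m]

open scoped MatrixOrder in
lemma span_posSemidef : Submodule.span ℂ {a : Matrix m m ℂ | a.PosSemidef} = ⊤ := by
  simpa only [Matrix.nonneg_iff_posSemidef] using CStarAlgebra.span_nonneg (A := Matrix m m ℂ)

lemma exists_posSemidef_apply_ne_zero {N : Type*} [AddCommMonoid N] [Module ℂ N]
    {φ : Matrix m m ℂ →ₗ[ℂ] N} (hφ : φ ≠ 0) : ∃ d : Matrix m m ℂ, d.PosSemidef ∧ φ d ≠ 0 := by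
  by_contra! h
  exact hφ (LinearMap.ext_on span_posSemidef fun a ha => by simpa using h a ha)

lemma IsPosFunctional.map_conjTranspose {ω : Matrix m m ℂ →ₗ[ℂ] ℂ} (hω : IsPosFunctional ω)
    (a : Matrix m m ℂ) : ω aᴴ = star (ω a) := by
  have ha : a ∈ Submodule.span ℂ {a : Matrix m m ℂ | a.PosSemidef} := by
    simp [span_posSemidef]
  induction ha using Submodule.span_induction with
  | mem a ha => rw [ha.isHermitian.eq, (IsSelfAdjoint.of_nonneg (hω a ha)).star_eq]
  | zero => simp
  | add a b _ _ iha ihb => simp [iha, ihb]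
  | smul c a _ ih => simp [ih]

lemma IsPosFunctional.posSemidef_apply_single {ω : Matrix m m ℂ →ₗ[ℂ] ℂ}
    (hω : IsPosFunctional ω) : (Matrix.of fun i j => ω (Matrix.single i j 1)).PosSemidef := by
  refine .of_dotProduct_mulVec_nonneg ?_ fun v => ?_
  · ext i j
    simp [← hω.map_conjTranspose]
  · have hv : vecMulVec (star v) v = ∑ i, ∑ j, (star (v i) * v j) • Matrix.single i j (1 : ℂ) := by
      conv_lhs => rw [matrix_eq_sum_single (vecMulVec (star v) v)]
      simp [Matrix.smul_single, vecMulVec_apply]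
    have hform : star v ⬝ᵥ (Matrix.of fun i j => ω (Matrix.single i j 1)) *ᵥ v
        = ω (vecMulVec (star v) v) := by
      simp only [hv, map_sum, map_smul, smul_eq_mul, dotProduct, mulVec, of_apply, Pi.star_apply,
        Finset.mul_sum]
      exact Finset.sum_congr rfl fun i _ => Finset.sum_congr rfl fun j _ => by ring
    exact hform ▸ hω _ (posSemidef_vecMulVec_star_self v)

lemma isPosFunctional_trace : IsPosFunctional (traceLinearMap m ℂ ℂ) :=
  fun _ ha => ha.trace_nonneg

end PositiveFunctional

lemma choiMatrix_smulRight (ω : Mat n →ₗ[ℂ] ℂ) (b : Mat n) :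
    choiMatrix (ω.smulRight b) = (Matrix.of fun i j => ω (Matrix.single i j 1)) ⊗ₖ b := by
  ext ⟨i, k⟩ ⟨j, l⟩
  simp [choiMatrix]

lemma isCP_smulRight {ω : Mat n →ₗ[ℂ] ℂ} (hω : IsPosFunctional ω) {b : Mat n}
    (hb : b.PosSemidef) : IsCP (ω.smulRight b) := by
  rw [IsCP, choiMatrix_smulRight]
  exact hω.posSemidef_apply_single.kronecker hb

namespace IsMappingCone

variable {J : Set (MatMap n)}

lemma sum_mem (hJ : IsMappingCone J) {ι : Type*} (s : Finset ι) {φ : ι → MatMap n}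
    (hφ : ∀ i ∈ s, φ i ∈ J) : ∑ i ∈ s, φ i ∈ J := by
  obtain ⟨ψ, hψ, -⟩ := hJ.nonzero
  have hzero : (0 : MatMap n) ∈ J := by simpa using hJ.smul_mem 0 le_rfl ψ hψ
  exact Finset.sum_induction _ (· ∈ J) (fun _ _ h h' => hJ.add_mem _ h _ h') hzero hφ

lemma smulRight_mem (hJ : IsMappingCone J) {ω : Mat n →ₗ[ℂ] ℂ} (hω : IsPosFunctional ω)
    {b : Mat n} (hb : b.PosSemidef) : ω.smulRight b ∈ J := by
  obtain ⟨φ, hφJ, hφ⟩ := hJ.nonzero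
  obtain ⟨d, hd, hφd⟩ := exists_posSemidef_apply_ne_zero hφ
  have hφd_psd := hJ.pos φ hφJ d hd
  set t := (φ d).trace
  have ht : t ≠ 0 := fun h => hφd (hφd_psd.trace_eq_zero_iff.mp h)
  have hb' : (t⁻¹ • b).PosSemidef := hb.smul (inv_nonneg.mpr hφd_psd.trace_nonneg)
  have hsandwich :
      (traceLinearMap (Fin n) ℂ ℂ).smulRight (t⁻¹ • b) ∘ₗ φ ∘ₗ ω.smulRight d = ω.smulRight b := by
    ext a : 1
    simp [smul_smul, t, ht]
  rw [← hsandwich]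
  exact hJ.comp_mem φ hφJ _ _ (isCP_smulRight isPosFunctional_trace hb') (isCP_smulRight hω hd)

end IsMappingCone

theorem statement_1_general (n : ℕ) (J : Set (MatMap n)) (hJ : IsMappingCone J) :
    {φ : MatMap n | IsSP φ} ⊆ J := by
  rintro φ ⟨k, b, ω, hb, hω, hφ⟩
  have hφ_sum : φ = ∑ i, (ω i).smulRight (b i) := LinearMap.ext fun a => by simp [hφ a]
  rw [hφ_sum]
  exact hJ.sum_mem _ fun i _ => hJ.smulRight_mem (hω i).1 (hb i)

/-- Lemma 1, second part. `SP` is a minimal mapping cone: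
`SP ⊆ J` for every mapping cone `J`. -/
theorem statement_1 (n : ℕ) (hn : 0 < n) (J : Set (MatMap n)) (hJ : IsMappingCone J) :
    {φ : MatMap n | IsSP φ} ⊆ J :=
  statement_1_general n J hJ

end Paper
end

section
/- Let J be a mapping cone in P and φ ∈ P. Then the following conditions are equivalent: (i) φ ∈ J°; (ii) φ∘α ∈ CP for all α ∈ J; (iii) α∘φ ∈ CP for all α ∈ J; (iv) φ̃∘(ι⊗α) is a positive linear functional for all α ∈ J; (v) (ι⊗α)(C_φ) is positive semidefinite for all α ∈ J, where ι is the identity map on M_n. -/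
open scoped ComplexOrder Kronecker
open Matrix

namespace Paper

variable {n : ℕ}

/-!
Write `⟨φ, ψ⟩ = Tr(C_φ C_ψ)`. Since every matrix is a Choi matrix and the positive semidefinite
cone is self-dual under the trace pairing, `χ ∈ CP` iff `⟨χ, ψ⟩ ≥ 0` for all `ψ ∈ CP`. Moreover
`⟨φ, ψ⟩` is the trace of the linear map `φ* ∘ ψ` of `M_n`, so cyclicity of the trace moves
compositions across the pairing: `⟨α ∘ φ, ψ⟩ = ⟨φ, α* ∘ ψ⟩` and `⟨φ ∘ α, ψ⟩ = ⟨φ, ψ ∘ α*⟩`.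
Thus (ii) says `⟨φ, ψ ∘ α*⟩ ≥ 0` for `α ∈ J`, `ψ ∈ CP`; as `J` is a mapping cone closed under
`*`, these maps `ψ ∘ α*` lie in `J` and include all of `J`, which is (i). The same argument gives
(iii); (v) is (iii) because `(ι ⊗ α)(C_φ) = C_{α ∘ φ}`, and (iv) is handled like (iii) using
`φ̃(C_ψ) = ⟨φ^t, ψ⟩ = ⟨φ, ψ^t⟩` and the closedness of `J` under `^t`.
-/

theorem _root_.Matrix.posSemidef_of_forall_dotProduct_mulVec_nonneg {m : Type*} [Fintype m]
    [DecidableEq m] {A : Matrix m m ℂ} (h : ∀ x, 0 ≤ star x ⬝ᵥ A *ᵥ x) : A.PosSemidef := by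
  rw [← Matrix.isPositive_toEuclideanLin_iff, LinearMap.isPositive_iff_complex]
  intro x
  set z := star x.ofLp ⬝ᵥ A *ᵥ x.ofLp
  have hz : 0 ≤ z := h x.ofLp
  have hinner : inner ℂ (A.toEuclideanLin x) x = star z := by
    rw [EuclideanSpace.inner_eq_star_dotProduct, Matrix.ofLp_toLpLin, Matrix.toLin'_apply,
      dotProduct_star, dotProduct_comm]
  rw [hinner, IsSelfAdjoint.of_nonneg hz, RCLike.re_to_complex]
  exact ⟨Complex.conj_eq_iff_re.mp (IsSelfAdjoint.of_nonneg hz), (Complex.le_def.mp hz).1⟩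

theorem _root_.Matrix.posSemidef_iff_forall_trace_mul_nonneg {m : Type*} [Fintype m]
    [DecidableEq m] {A : Matrix m m ℂ} :
    A.PosSemidef ↔ ∀ B : Matrix m m ℂ, B.PosSemidef → 0 ≤ (A * B).trace := by
  have trace_mul_vecMulVec (v : m → ℂ) :
      (A * vecMulVec v (star v)).trace = star v ⬝ᵥ A *ᵥ v := by
    rw [mul_vecMulVec, trace_vecMulVec, dotProduct_comm]
  constructor
  · intro hA B hB
    obtain ⟨k, v, rfl⟩ := posSemidef_iff_eq_sum_vecMulVec.mp hB
    simp only [Finset.mul_sum, trace_sum, trace_mul_vecMulVec]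
    exact Finset.sum_nonneg fun i _ => hA.dotProduct_mulVec_nonneg (v i)
  · intro h
    refine posSemidef_of_forall_dotProduct_mulVec_nonneg fun v => ?_
    rw [← trace_mul_vecMulVec]
    exact h _ (posSemidef_vecMulVec_self_star v)

theorem _root_.LinearMap.trace_eq_sum_apply_single {m R : Type*} [Fintype m] [DecidableEq m]
    [CommRing R] (f : Matrix m m R →ₗ[R] Matrix m m R) :
    LinearMap.trace R (Matrix m m R) f = ∑ i, ∑ k, f (single i k 1) i k := by
  rw [LinearMap.trace_eq_matrix_trace R (stdBasis R m m)]
  simp only [Matrix.trace, diag, LinearMap.toMatrix_apply, stdBasis_eq_single,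
    Fintype.sum_prod_type]
  rfl

theorem IsAdjointPair.symm {φ ψ : MatMap n} (h : IsAdjointPair φ ψ) : IsAdjointPair ψ φ :=
  fun a b => by rw [trace_mul_comm, ← h, trace_mul_comm]

theorem IsAdjointPair.comp {α α' β β' : MatMap n} (hα : IsAdjointPair α α')
    (hβ : IsAdjointPair β β') : IsAdjointPair (α ∘ₗ β) (β' ∘ₗ α') :=
  fun a b => by rw [LinearMap.comp_apply, hα, hβ, LinearMap.comp_apply]

theorem exists_isAdjointPair (φ : MatMap n) : ∃ ψ, IsAdjointPair φ ψ := by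
  let B : LinearMap.BilinForm ℂ (Mat n) :=
    (LinearMap.mul ℂ (Mat n)).compr₂ (traceLinearMap (Fin n) ℂ ℂ)
  have hB : B.Nondegenerate :=
    ⟨fun a ha => ext_iff_trace_mul_right.mpr fun x => by simpa [B] using ha x,
      fun b hb => ext_iff_trace_mul_left.mpr fun x => by simpa [B] using hb x⟩
  refine ⟨B.leftAdjointOfNondegenerate hB φ, fun a b => ?_⟩
  have := B.isAdjointPairLeftAdjointOfNondegenerate hB φ b a
  simp only [B, LinearMap.compr₂_apply, LinearMap.mul_apply', traceLinearMap_apply] at this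
  rw [trace_mul_comm, ← this, trace_mul_comm]

noncomputable def choiPairing (φ ψ : MatMap n) : ℂ := (choiMatrix φ * choiMatrix ψ).trace

theorem choiPairing_eq_sum (φ ψ : MatMap n) :
    choiPairing φ ψ = ∑ i, ∑ k, (φ (single i k 1) * ψ (single k i 1)).trace := by
  simp only [choiPairing, Matrix.trace, diag, mul_apply, choiMatrix, of_apply,
    Fintype.sum_prod_type]
  exact Finset.sum_congr rfl fun i _ => Finset.sum_comm

theorem choiMatrix_surjective : Function.Surjective (choiMatrix (n := n)) := by
  intro x
  refine ⟨{ toFun := fun a => Matrix.of fun j l => ∑ i, ∑ k, a i k * x (i, j) (k, l)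
            map_add' := fun a b => by ext; simp [add_mul, Finset.sum_add_distrib]
            map_smul' := fun c a => by ext; simp [Finset.mul_sum, mul_assoc] }, ?_⟩
  ext ⟨i, j⟩ ⟨k, l⟩
  simp [choiMatrix, Matrix.single, ite_and]

theorem isCP_iff_forall_choiPairing_nonneg {χ : MatMap n} :
    IsCP χ ↔ ∀ ψ, IsCP ψ → 0 ≤ choiPairing χ ψ := by
  rw [IsCP, posSemidef_iff_forall_trace_mul_nonneg, choiMatrix_surjective.forall]
  rfl

theorem isCP_id : IsCP (LinearMap.id : MatMap n) := by
  let w : Fin n × Fin n → ℂ := fun p => if p.1 = p.2 then 1 else 0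
  have hid : choiMatrix (LinearMap.id : MatMap n) = vecMulVec w (star w) := by
    ext ⟨i, j⟩ ⟨k, l⟩
    by_cases hij : i = j <;> by_cases hkl : k = l <;>
      simp [choiMatrix, w, vecMulVec_apply, Matrix.single, hij, hkl]
  rw [IsCP, hid]
  exact posSemidef_vecMulVec_self_star w

theorem choiPairing_eq_trace {φ φ' : MatMap n} (h : IsAdjointPair φ φ') (ψ : MatMap n) :
    choiPairing φ ψ = LinearMap.trace ℂ (Mat n) (φ' ∘ₗ ψ) := by
  rw [choiPairing_eq_sum, LinearMap.trace_eq_sum_apply_single, Finset.sum_comm]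
  refine Finset.sum_congr rfl fun k _ => Finset.sum_congr rfl fun i _ => ?_
  rw [h, trace_single_mul, one_smul, LinearMap.comp_apply]

theorem choiPairing_comp_left {α α' : MatMap n} (h : IsAdjointPair α α') (φ ψ : MatMap n) :
    choiPairing (α ∘ₗ φ) ψ = choiPairing φ (α' ∘ₗ ψ) := by
  obtain ⟨φ', hφ⟩ := exists_isAdjointPair φ
  rw [choiPairing_eq_trace (h.comp hφ), choiPairing_eq_trace hφ, LinearMap.comp_assoc]

theorem choiPairing_comp_right {α α' : MatMap n} (h : IsAdjointPair α α') (φ ψ : MatMap n) :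
    choiPairing (φ ∘ₗ α) ψ = choiPairing φ (ψ ∘ₗ α') := by
  obtain ⟨φ', hφ⟩ := exists_isAdjointPair φ
  rw [choiPairing_eq_trace (hφ.comp h), choiPairing_eq_trace hφ, LinearMap.comp_assoc,
    LinearMap.trace_comp_comm', LinearMap.comp_assoc]

theorem choiMatrix_mapTranspose (φ : MatMap n) :
    choiMatrix (mapTranspose φ) = (choiMatrix φ)ᵀ := by
  ext ⟨i, j⟩ ⟨k, l⟩
  simp [choiMatrix, mapTranspose, transposeMap, transpose_single]

theorem mapTranspose_comp (α β : MatMap n) :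
    mapTranspose (α ∘ₗ β) = mapTranspose α ∘ₗ mapTranspose β := by
  ext a : 1
  simp [mapTranspose, transposeMap]

theorem mapTranspose_mapTranspose (φ : MatMap n) : mapTranspose (mapTranspose φ) = φ := by
  ext a : 1
  simp [mapTranspose, transposeMap]

theorem IsCP.mapTranspose {ψ : MatMap n} (h : IsCP ψ) : IsCP (mapTranspose ψ) := by
  rw [IsCP, choiMatrix_mapTranspose]
  exact h.transpose

theorem choiPairing_mapTranspose_left (φ ψ : MatMap n) :
    choiPairing (mapTranspose φ) ψ = choiPairing φ (mapTranspose ψ) := by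
  rw [choiPairing, choiPairing, choiMatrix_mapTranspose, choiMatrix_mapTranspose,
    ← trace_transpose, transpose_mul, transpose_transpose, trace_mul_comm]

theorem choiMatrix_comp (α φ : MatMap n) :
    choiMatrix (α ∘ₗ φ) = idTensor α (choiMatrix φ) := rfl

theorem tilde_choiMatrix (φ ψ : MatMap n) :
    tilde φ (choiMatrix ψ) = choiPairing (mapTranspose φ) ψ := by
  rw [choiPairing, choiMatrix_mapTranspose]
  rfl

theorem mem_dualCone_iff {J : Set (MatMap n)} {φ : MatMap n} (hφ : IsPosMap φ) :
    φ ∈ dualCone J ↔ ∀ χ ∈ J, 0 ≤ choiPairing φ χ :=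
  and_iff_right hφ

namespace IsMappingCone

variable {J : Set (MatMap n)}

theorem comp_left_mem (hJ : IsMappingCone J) {φ α : MatMap n} (hφ : φ ∈ J) (hα : IsCP α) :
    α ∘ₗ φ ∈ J := by
  simpa using hJ.comp_mem φ hφ α LinearMap.id hα isCP_id

theorem comp_right_mem (hJ : IsMappingCone J) {φ β : MatMap n} (hφ : φ ∈ J) (hβ : IsCP β) :
    φ ∘ₗ β ∈ J := by
  simpa using hJ.comp_mem φ hφ LinearMap.id β isCP_id hβ

theorem exists_isAdjointPair_mem (hJ : IsMappingCone J) {φ : MatMap n} (hφ : φ ∈ J) :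
    ∃ ψ ∈ J, IsAdjointPair φ ψ := by
  obtain ⟨ψ, hψ⟩ := exists_isAdjointPair φ
  exact ⟨ψ, hJ.adjoint_mem φ hφ ψ hψ, hψ⟩

theorem mem_dualCone_iff_forall_isCP_comp_right (hJ : IsMappingCone J) {φ : MatMap n}
    (hφ : IsPosMap φ) : φ ∈ dualCone J ↔ ∀ α ∈ J, IsCP (φ ∘ₗ α) := by
  rw [mem_dualCone_iff hφ]
  constructor
  · intro h α hα
    obtain ⟨α', hα', hadj⟩ := hJ.exists_isAdjointPair_mem hα
    refine isCP_iff_forall_choiPairing_nonneg.mpr fun ψ hψ => ?_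
    rw [choiPairing_comp_right hadj]
    exact h _ (hJ.comp_left_mem hα' hψ)
  · intro h χ hχ
    obtain ⟨χ', hχ', hadj⟩ := hJ.exists_isAdjointPair_mem hχ
    simpa [choiPairing_comp_right hadj.symm] using
      isCP_iff_forall_choiPairing_nonneg.mp (h χ' hχ') _ isCP_id

theorem mem_dualCone_iff_forall_isCP_comp_left (hJ : IsMappingCone J) {φ : MatMap n}
    (hφ : IsPosMap φ) : φ ∈ dualCone J ↔ ∀ α ∈ J, IsCP (α ∘ₗ φ) := by
  rw [mem_dualCone_iff hφ]
  constructor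
  · intro h α hα
    obtain ⟨α', hα', hadj⟩ := hJ.exists_isAdjointPair_mem hα
    refine isCP_iff_forall_choiPairing_nonneg.mpr fun ψ hψ => ?_
    rw [choiPairing_comp_left hadj]
    exact h _ (hJ.comp_right_mem hα' hψ)
  · intro h χ hχ
    obtain ⟨χ', hχ', hadj⟩ := hJ.exists_isAdjointPair_mem hχ
    simpa [choiPairing_comp_left hadj.symm] using
      isCP_iff_forall_choiPairing_nonneg.mp (h χ' hχ') _ isCP_id

theorem mem_dualCone_iff_forall_isPosFunctional (hJ : IsMappingCone J) {φ : MatMap n}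
    (hφ : IsPosMap φ) : φ ∈ dualCone J ↔ ∀ α ∈ J, IsPosFunctional (tilde φ ∘ₗ idTensor α) := by
  have key : ∀ α, IsPosFunctional (tilde φ ∘ₗ idTensor α) ↔
      ∀ ψ, IsCP ψ → 0 ≤ choiPairing (mapTranspose φ) (α ∘ₗ ψ) := fun α => by
    simp only [IsPosFunctional, choiMatrix_surjective.forall, LinearMap.comp_apply,
      ← choiMatrix_comp, tilde_choiMatrix]
    rfl
  simp only [mem_dualCone_iff hφ, key]
  constructor
  · intro h α hα ψ hψ
    rw [choiPairing_mapTranspose_left, mapTranspose_comp]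
    exact h _ (hJ.comp_right_mem (hJ.transpose_mem α hα) hψ.mapTranspose)
  · intro h χ hχ
    simpa [choiPairing_mapTranspose_left, mapTranspose_mapTranspose] using
      h _ (hJ.transpose_mem χ hχ) _ isCP_id

end IsMappingCone

/-- Theorem 2. For a mapping cone `J` and `φ ∈ P`, the following
are equivalent: (i) `φ ∈ J°`; (ii) `φ ∘ α ∈ CP` for all `α ∈ J`; (iii) `α ∘ φ ∈ CP`
for all `α ∈ J`; (iv) `φ̃ ∘ (ι ⊗ α) ≥ 0` for all `α ∈ J`; (v) `(ι ⊗ α)(C_φ) ≥ 0`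
for all `α ∈ J`. -/
theorem statement_2 (n : ℕ) (J : Set (MatMap n)) (hJ : IsMappingCone J)
    (φ : MatMap n) (hφ : IsPosMap φ) :
    List.TFAE [φ ∈ dualCone J,
      ∀ α ∈ J, IsCP (φ ∘ₗ α),
      ∀ α ∈ J, IsCP (α ∘ₗ φ),
      ∀ α ∈ J, IsPosFunctional (tilde φ ∘ₗ idTensor α),
      ∀ α ∈ J, (idTensor α (choiMatrix φ)).PosSemidef] := by
  tfae_have 1 ↔ 2 := hJ.mem_dualCone_iff_forall_isCP_comp_right hφ
  tfae_have 1 ↔ 3 := hJ.mem_dualCone_iff_forall_isCP_comp_left hφ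
  tfae_have 1 ↔ 4 := hJ.mem_dualCone_iff_forall_isPosFunctional hφ
  tfae_have 3 ↔ 5 := by simp only [IsCP, choiMatrix_comp]
  tfae_finish

end Paper
end

section
/- Let J be a mapping cone, let a ∈ M_n, and let e be the range projection of a. Then Ad e ∈ J if and only if Ad a ∈ J. -/
open scoped ComplexOrder Kronecker
open Matrix

namespace Paper

variable {n : ℕ}

/-! Since `e a = a`, `Ad a = Ad a ∘ Ad e`; since the range of `e` lies in the range of `a`,
`e = a g` for some `g`, so `Ad e = Ad g ∘ Ad a`. A mapping cone is stable under composition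
with the completely positive maps `Ad V`. -/

theorem _root_.LinearMap.exists_comp_eq_of_range_le {R M N P : Type*} [Ring R]
    [AddCommGroup M] [Module R M] [AddCommGroup N] [Module R N] [AddCommGroup P] [Module R P]
    [Module.Projective R P] {f : M →ₗ[R] N} {g : P →ₗ[R] N}
    (h : LinearMap.range g ≤ LinearMap.range f) : ∃ k : P →ₗ[R] M, f ∘ₗ k = g := by
  obtain ⟨k, hk⟩ := Module.projective_lifting_property f.rangeRestrict
    (g.codRestrict _ fun x => h ⟨x, rfl⟩) f.surjective_rangeRestrict
  exact ⟨k, LinearMap.ext fun x => congr_arg Subtype.val (LinearMap.congr_fun hk x)⟩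

lemma adMap_comp_adMap (V W : Mat n) : adMap W ∘ₗ adMap V = adMap (V * W) := by
  ext x : 1
  simp [adMap, Matrix.conjTranspose_mul, Matrix.mul_assoc]

lemma adMap_one : adMap (1 : Mat n) = LinearMap.id := by
  ext x : 1
  simp [adMap]

lemma isCP_adMap (V : Mat n) : IsCP (adMap V) := by
  set v : Matrix (Fin 1) (Fin n × Fin n) ℂ := Matrix.of fun _ p => V p.1 p.2
  have h : choiMatrix (adMap V) = vᴴ * v := by
    ext p q
    simp [v, choiMatrix, adMap, Matrix.mul_apply, Matrix.single, ite_and]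
  rw [IsCP, h]
  exact Matrix.posSemidef_conjTranspose_mul_self v

lemma IsMappingCone.adMap_mul_mem {J : Set (MatMap n)} (hJ : IsMappingCone J) {V : Mat n}
    (hV : adMap V ∈ J) (W : Mat n) : adMap (V * W) ∈ J := by
  simpa [adMap_one, adMap_comp_adMap] using
    hJ.comp_mem _ hV (adMap W) (adMap 1) (isCP_adMap W) (isCP_adMap 1)

lemma IsRangeProjection.range_toEuclideanCLM_le {a e : Mat n} (he : IsRangeProjection e a) :
    LinearMap.range (toEuclideanCLM (𝕜 := ℂ) e).toLinearMap ≤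
      LinearMap.range (toEuclideanCLM (𝕜 := ℂ) a).toLinearMap := by
  let ψ := toEuclideanCLM (n := Fin n) (𝕜 := ℂ)
  let S : Submodule ℂ (EuclideanSpace ℂ (Fin n)) := LinearMap.range (ψ a).toLinearMap
  let p := S.starProjection
  have hpa : p * ψ a = ψ a :=
    ContinuousLinearMap.ext fun x => S.starProjection_eq_self_iff.mpr ⟨x, rfl⟩
  have hp : IsProjection (ψ.symm p) := by
    constructor
    · rw [← map_mul, S.isIdempotentElem_starProjection.eq]
    · rw [← Matrix.star_eq_conjTranspose, ← StarRingEquivClass.map_star ψ.symm p,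
        (isSelfAdjoint_starProjection S).star_eq]
  -- minimality of `e` puts it below the orthogonal projection onto the range of `a`
  have hpe : ψ.symm p * e = e := he.2.2 _ hp (by simpa using congr_arg ψ.symm hpa)
  rw [← hpe, map_mul, StarAlgEquiv.apply_symm_apply]
  calc LinearMap.range (p * ψ e).toLinearMap ≤ LinearMap.range p.toLinearMap :=
        LinearMap.range_comp_le_range _ _
    _ = S := S.range_starProjection

lemma IsRangeProjection.exists_mul_eq {a e : Mat n} (he : IsRangeProjection e a) :
    ∃ g : Mat n, a * g = e := by
  let ψ := toEuclideanCLM (n := Fin n) (𝕜 := ℂ)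
  obtain ⟨k, hk⟩ := LinearMap.exists_comp_eq_of_range_le he.range_toEuclideanCLM_le
  have hak : ψ a * LinearMap.toContinuousLinearMap k = ψ e :=
    ContinuousLinearMap.ext (LinearMap.congr_fun hk)
  exact ⟨ψ.symm (LinearMap.toContinuousLinearMap k), by simpa using congr_arg ψ.symm hak⟩

/-- Remark. If `J` is a mapping cone, `a ∈ M_n` and `e` is the
range projection of `a`, then `Ad e ∈ J` iff `Ad a ∈ J`. -/
theorem statement_5 (n : ℕ) (J : Set (MatMap n)) (hJ : IsMappingCone J)
    (a e : Mat n) (he : IsRangeProjection e a) :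
    adMap e ∈ J ↔ adMap a ∈ J := by
  obtain ⟨g, hg⟩ := he.exists_mul_eq
  refine ⟨fun h => ?_, fun h => ?_⟩
  · simpa only [he.2.1] using hJ.adMap_mul_mem h a
  · simpa only [hg] using hJ.adMap_mul_mem h g

end Paper
end

section
/- Let φ ∈ P. Then the following conditions are equivalent: (i) φ ∈ CP ∩ coCP; (ii) φ∘α ∈ CP for all α ∈ CP ⋁ coCP; (iii) φ is a PPT-map. -/
/-! The functional `φ̃` has density matrix `C_φᵀ`, so by trace duality it is positive exactly when
`C_φ` is; composing with `ι ⊗ t` partially transposes that density, which turns `C_φ` into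
`C_{t∘φ}`. Hence (iii) ⇔ (i). Writing `C_φ = B*B` gives a Kraus decomposition of a completely
positive map, so `CP` is closed under composition, and `φ ∘ ψ = (φ ∘ t) ∘ (t ∘ ψ)` shows that the
composite of two co-completely positive maps is completely positive; this gives (i) ⇒ (ii).
Conversely (ii) applied to `α = ι` and `α = t` gives (i). -/

open scoped ComplexOrder Kronecker
open Matrix

namespace Matrix

variable {m : Type*} [Fintype m] [DecidableEq m]

theorem posSemidef_of_forall_dotProduct_mulVec_nonneg_s13 {A : Matrix m m ℂ}
    (h : ∀ v : m → ℂ, 0 ≤ star v ⬝ᵥ A *ᵥ v) : A.PosSemidef := by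
  rw [← isPositive_toEuclideanLin_iff, LinearMap.isPositive_iff_complex]
  intro x
  obtain ⟨r, hr, hrz⟩ := RCLike.nonneg_iff_exists_ofReal.mp (h x.ofLp)
  rw [← inner_conj_symm, EuclideanSpace.inner_eq_star_dotProduct]
  simp [dotProduct_comm _ (star x.ofLp), ← hrz, hr]

open scoped MatrixOrder in
theorem posSemidef_iff_forall_trace_mul_nonneg_s13 {A : Matrix m m ℂ} :
    A.PosSemidef ↔ ∀ x : Matrix m m ℂ, x.PosSemidef → 0 ≤ (A * x).trace := by
  refine ⟨fun hA x hx => ?_, fun h => posSemidef_of_forall_dotProduct_mulVec_nonneg_s13 fun v => ?_⟩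
  · obtain ⟨B, rfl⟩ := CStarAlgebra.nonneg_iff_eq_star_mul_self.mp hx.nonneg
    rw [← Matrix.mul_assoc, trace_mul_cycle]
    exact (hA.mul_mul_conjTranspose_same B).trace_nonneg
  · simpa [mul_vecMulVec, dotProduct_mulVec, dotProduct_comm] using
      h _ (posSemidef_vecMulVec_self_star v)

theorem conjTranspose_mul_single_mul_apply {k R : Type*} [Semiring R] [StarRing R]
    (V : Matrix m k R) (a b : m) (c d : k) :
    (Vᴴ * single a b (1 : R) * V) c d = star (V a c) * V b d := by
  simp [mul_apply, single_apply, ite_and, Finset.sum_ite_eq]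

/-- The partial transpose `a ⊗ b ↦ a ⊗ bᵀ` on `Matrix α α R ⊗ Matrix β β R`. -/
def partialTranspose {α β R : Type*} (x : Matrix (α × β) (α × β) R) :
    Matrix (α × β) (α × β) R :=
  of fun p q => x (p.1, q.2) (q.1, p.2)

theorem trace_transpose_mul_partialTranspose {α β R : Type*} [Fintype α] [Fintype β]
    [AddCommMonoid R] [Mul R] (A x : Matrix (α × β) (α × β) R) :
    (Aᵀ * partialTranspose x).trace = ((partialTranspose A)ᵀ * x).trace := by
  simp only [trace, diag, mul_apply, transpose_apply, partialTranspose, of_apply]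
  rw [← Fintype.sum_prod_type', ← Fintype.sum_prod_type']
  exact Fintype.sum_equiv
    { toFun := fun z => ((z.1.1, z.2.2), (z.2.1, z.1.2))
      invFun := fun z => ((z.1.1, z.2.2), (z.2.1, z.1.2))
      left_inv := fun _ => rfl
      right_inv := fun _ => rfl } _ _ fun _ => rfl

end Matrix

namespace Paper

variable {n : ℕ}

theorem choiMatrix_injective : Function.Injective (choiMatrix (n := n)) := by
  intro φ ψ h
  refine (Matrix.stdBasis ℂ (Fin n) (Fin n)).ext fun ij => ?_
  ext k l
  rw [stdBasis_eq_single]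
  exact congrFun (congrFun h (ij.1, k)) (ij.2, l)

theorem adMap_apply (V a : Mat n) : adMap V a = Vᴴ * a * V := rfl

theorem adMap_mul (V W : Mat n) : adMap (W * V) = adMap V ∘ₗ adMap W := by
  ext1 a
  simp only [LinearMap.comp_apply, adMap_apply, conjTranspose_mul, Matrix.mul_assoc]

theorem choiMatrix_sum_adMap {ι : Type*} [Fintype ι] (V : ι → Mat n) :
    choiMatrix (∑ i, adMap (V i)) =
      (of fun i p => V i p.1 p.2)ᴴ * of fun i p => V i p.1 p.2 := by
  ext p q
  simp only [choiMatrix, of_apply, LinearMap.sum_apply, Matrix.sum_apply, adMap_apply,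
    conjTranspose_mul_single_mul_apply]
  simp [mul_apply]

theorem isCP_sum_adMap {ι : Type*} [Fintype ι] (V : ι → Mat n) : IsCP (∑ i, adMap (V i)) := by
  rw [IsCP, choiMatrix_sum_adMap]
  exact posSemidef_conjTranspose_mul_self _

open scoped MatrixOrder in
theorem IsCP.exists_eq_sum_adMap {φ : MatMap n} (h : IsCP φ) :
    ∃ V : Fin n × Fin n → Mat n, φ = ∑ i, adMap (V i) := by
  obtain ⟨B, hB⟩ := CStarAlgebra.nonneg_iff_eq_star_mul_self.mp h.nonneg
  refine ⟨fun i => of fun k r => B i (k, r), choiMatrix_injective ?_⟩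
  rw [choiMatrix_sum_adMap, hB, star_eq_conjTranspose]
  rfl

theorem IsCP.comp {φ ψ : MatMap n} (hφ : IsCP φ) (hψ : IsCP ψ) : IsCP (φ ∘ₗ ψ) := by
  obtain ⟨V, rfl⟩ := hφ.exists_eq_sum_adMap
  obtain ⟨W, rfl⟩ := hψ.exists_eq_sum_adMap
  have hkraus : (∑ i, adMap (V i)) ∘ₗ (∑ j, adMap (W j)) =
      ∑ p : _ × _, adMap (W p.2 * V p.1) := by
    ext1 a
    simp [adMap_mul, LinearMap.sum_apply, map_sum, Fintype.sum_prod_type]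
  rw [hkraus]
  exact isCP_sum_adMap _

theorem IsCP.add {φ ψ : MatMap n} (hφ : IsCP φ) (hψ : IsCP ψ) : IsCP (φ + ψ) :=
  PosSemidef.add hφ hψ

theorem isCP_zero : IsCP (0 : MatMap n) :=
  PosSemidef.zero

theorem transposeMap_comp_transposeMap : transposeMap n ∘ₗ transposeMap n = LinearMap.id := by
  ext1 a
  exact transpose_transpose a

theorem isCP_mapTranspose_iff {φ : MatMap n} : IsCP (mapTranspose φ) ↔ IsCP φ := by
  rw [IsCP, IsCP, choiMatrix_mapTranspose, posSemidef_transpose_iff]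

theorem isCoCP_iff_isCP_comp_transposeMap {φ : MatMap n} :
    IsCoCP φ ↔ IsCP (φ ∘ₗ transposeMap n) := by
  have : φ ∘ₗ transposeMap n = mapTranspose (transposeMap n ∘ₗ φ) := by
    simp only [mapTranspose, ← LinearMap.comp_assoc, transposeMap_comp_transposeMap,
      LinearMap.id_comp]
  rw [this, isCP_mapTranspose_iff, IsCoCP]

theorem IsCoCP.isCP_comp {φ ψ : MatMap n} (hφ : IsCoCP φ) (hψ : IsCoCP ψ) :
    IsCP (φ ∘ₗ ψ) := by
  have : φ ∘ₗ ψ = (φ ∘ₗ transposeMap n) ∘ₗ (transposeMap n ∘ₗ ψ) := by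
    rw [LinearMap.comp_assoc, ← LinearMap.comp_assoc ψ,
      transposeMap_comp_transposeMap, LinearMap.id_comp]
  rw [this]
  exact (isCoCP_iff_isCP_comp_transposeMap.mp hφ).comp hψ

theorem isCoCP_zero : IsCoCP (0 : MatMap n) := by
  rw [IsCoCP, LinearMap.comp_zero]
  exact isCP_zero

theorem isCoCP_transposeMap : IsCoCP (transposeMap n) := by
  rw [IsCoCP, transposeMap_comp_transposeMap]
  exact isCP_id

theorem Decomposable.of_isCP {φ : MatMap n} (h : IsCP φ) : Decomposable φ :=
  ⟨φ, 0, h, isCoCP_zero, (add_zero φ).symm⟩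

theorem Decomposable.of_isCoCP {φ : MatMap n} (h : IsCoCP φ) : Decomposable φ :=
  ⟨0, φ, isCP_zero, h, (zero_add φ).symm⟩

theorem tilde_apply (φ : MatMap n) (x : BigMat n) :
    tilde φ x = ((choiMatrix φ)ᵀ * x).trace := rfl

theorem idTensor_transposeMap_apply (x : BigMat n) :
    idTensor (transposeMap n) x = partialTranspose x := rfl

theorem choiMatrix_transposeMap_comp (φ : MatMap n) :
    choiMatrix (transposeMap n ∘ₗ φ) = partialTranspose (choiMatrix φ) := rfl

theorem tilde_comp_idTensor_transposeMap (φ : MatMap n) :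
    tilde φ ∘ₗ idTensor (transposeMap n) = tilde (transposeMap n ∘ₗ φ) := by
  ext1 x
  rw [LinearMap.comp_apply, tilde_apply, tilde_apply, idTensor_transposeMap_apply,
    choiMatrix_transposeMap_comp, trace_transpose_mul_partialTranspose]

theorem isPosFunctional_tilde_iff (φ : MatMap n) : IsPosFunctional (tilde φ) ↔ IsCP φ := by
  rw [IsCP, ← posSemidef_transpose_iff, posSemidef_iff_forall_trace_mul_nonneg_s13]
  rfl

theorem isPPTMap_iff (φ : MatMap n) : IsPPTMap φ ↔ IsCP φ ∧ IsCoCP φ := by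
  rw [IsPPTMap, tilde_comp_idTensor_transposeMap, isPosFunctional_tilde_iff,
    isPosFunctional_tilde_iff, IsCoCP]

theorem statement_13_general (n : ℕ) (φ : MatMap n) :
    List.TFAE [IsCP φ ∧ IsCoCP φ,
      ∀ α : MatMap n, Decomposable α → IsCP (φ ∘ₗ α),
      IsPPTMap φ] := by
  tfae_have 1 → 2 := by
    rintro ⟨hcp, hcocp⟩ α ⟨β, γ, hβ, hγ, rfl⟩
    rw [LinearMap.comp_add]
    exact (hcp.comp hβ).add (hcocp.isCP_comp hγ)
  tfae_have 2 → 1 := fun h =>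
    ⟨LinearMap.comp_id φ ▸ h _ (.of_isCP isCP_id),
      isCoCP_iff_isCP_comp_transposeMap.mpr (h _ (.of_isCoCP isCoCP_transposeMap))⟩
  tfae_have 1 ↔ 3 := (isPPTMap_iff φ).symm
  tfae_finish

/-- Proposition 10. For `φ ∈ P` the following are equivalent:
(i) `φ ∈ CP ∩ coCP`; (ii) `φ ∘ α ∈ CP` for all `α ∈ CP ⋁ coCP`; (iii) `φ` is a
PPT-map. -/
theorem statement_13 (n : ℕ) (φ : MatMap n) (hφ : IsPosMap φ) :
    List.TFAE [IsCP φ ∧ IsCoCP φ,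
      ∀ α : MatMap n, Decomposable α → IsCP (φ ∘ₗ α),
      IsPPTMap φ] :=
  statement_13_general n φ

end Paper
end
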